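/- Let A be a unital pro-C*-algebra and let a ∈ A be normal (a*a = aa*). Then ‖a‖_∞ = r_A(a) as elements of [0,∞], where ‖a‖_∞ = sup_{p ∈ 𝒩(A)} p(a) and r_A(a) = sup{|λ| : λ ∈ sp_A(a)} is the spectral radius. In particular, a normal element is bounded if and only if it is spectrally bounded. -/

import Mathlib

open scoped ENNReal

def IsCStarSeminorm {A : Type*} [Ring A] [StarRing A] [Algebra ℂ A] (p : A → ℝ) : Prop :=
  (∀ a, 0 ≤ p a) ∧ (∀ a b, p (a + b) ≤ p a + p b) ∧
    (∀ (c : ℂ) (a : A), p (c • a) = ‖c‖ * p a) ∧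
    (∀ a b, p (a * b) ≤ p a * p b) ∧ (∀ a, p (star a * a) = p a ^ 2)

def contCStarSeminorms (A : Type*) [TopologicalSpace A] [Ring A] [StarRing A] [Algebra ℂ A] :
    Set (A → ℝ) :=
  {p | IsCStarSeminorm p ∧ Continuous p}

class ProCStarAlgebra (A : Type*) [UniformSpace A] [Ring A] [StarRing A] [Algebra ℂ A] :
    Prop where
  t2 : T2Space A
  complete : CompleteSpace A
  topologicalRing : IsTopologicalRing A
  continuousStar : ContinuousStar A
  uniformAddGroup : IsUniformAddGroup A
  mem_nhds_zero : ∀ s : Set A, s ∈ nhds (0 : A) ↔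
    ∃ p ∈ contCStarSeminorms A, ∃ ε : ℝ, 0 < ε ∧ {a : A | p a < ε} ⊆ s

noncomputable def uniformNorm (A : Type*) [UniformSpace A] [Ring A] [StarRing A] [Algebra ℂ A]
    (a : A) : ℝ≥0∞ :=
  ⨆ p ∈ contCStarSeminorms A, ENNReal.ofReal (p a)

def boundedElems (A : Type*) [UniformSpace A] [Ring A] [StarRing A] [Algebra ℂ A] : Set A :=
  {a | uniformNorm A a < ⊤}

def expSet (A : Type*) [UniformSpace A] [Ring A] [StarRing A] [Algebra ℂ A] : Set A :=
  {w | ∃ (n : ℕ) (a e : Fin n → A),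
    (∀ j, star (a j) = a j) ∧
    (∀ j, HasSum (fun k : ℕ => ((Complex.I ^ k / (k.factorial : ℂ)) • a j ^ k)) (e j)) ∧
    w = (List.ofFn e).prod}

/-!
If `p` is a C*-seminorm and `a` is normal, the C*-identity gives `p (a ^ 2 ^ k) = p a ^ 2 ^ k`.
In the Banach algebra completing `(A, p)`, Gelfand's formula along the exponents `2 ^ k` then
identifies `p a` with the spectral radius of the image of `a`, and a unital homomorphism can only
shrink spectra, so `p a ≤ r_A(a)`. Conversely, if `‖a‖_∞ < |z|` then every continuous
C*-seminorm of `z⁻¹ • a` is `< 1`, so the Neumann series `∑ (z⁻¹ • a) ^ n` converges in the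
complete algebra `A` and `z - a` is invertible.
-/

open UniformSpace

namespace IsCStarSeminorm

variable {A : Type*} [Ring A] [StarRing A] [Algebra ℂ A] {p : A → ℝ}

lemma nonneg (hp : IsCStarSeminorm p) (a : A) : 0 ≤ p a := hp.1 a

lemma map_add_le (hp : IsCStarSeminorm p) (a b : A) : p (a + b) ≤ p a + p b := hp.2.1 a b

lemma map_smul (hp : IsCStarSeminorm p) (c : ℂ) (a : A) : p (c • a) = ‖c‖ * p a := hp.2.2.1 c a

lemma map_mul_le (hp : IsCStarSeminorm p) (a b : A) : p (a * b) ≤ p a * p b := hp.2.2.2.1 a b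

lemma map_star_mul_self (hp : IsCStarSeminorm p) (a : A) : p (star a * a) = p a ^ 2 :=
  hp.2.2.2.2 a

lemma map_zero (hp : IsCStarSeminorm p) : p 0 = 0 := by
  simpa using hp.map_smul 0 0

lemma map_one_le (hp : IsCStarSeminorm p) : p 1 ≤ 1 := by
  have h := hp.map_star_mul_self 1
  rw [star_one, one_mul] at h
  nlinarith [hp.nonneg 1]

def toRingSeminorm (hp : IsCStarSeminorm p) : RingSeminorm A where
  toFun := p
  map_zero' := hp.map_zero
  add_le' := hp.map_add_le
  neg' a := by simpa using hp.map_smul (-1) a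
  mul_le' := hp.map_mul_le

lemma map_pow_le (hp : IsCStarSeminorm p) (a : A) (n : ℕ) : p (a ^ n) ≤ p a ^ n :=
  map_pow_le_pow' (f := hp.toRingSeminorm) hp.map_one_le a n

lemma map_pow_two_pow_of_isSelfAdjoint (hp : IsCStarSeminorm p) {s : A} (hs : IsSelfAdjoint s)
    (k : ℕ) : p (s ^ 2 ^ k) = p s ^ 2 ^ k := by
  induction k with
  | zero => simp
  | succ k ih =>
    have hsk : star (s ^ 2 ^ k) = s ^ 2 ^ k := (hs.pow _).star_eq
    have h := hp.map_star_mul_self (s ^ 2 ^ k)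
    rw [hsk] at h
    rw [pow_succ, pow_mul, sq, h, ih, ← pow_mul, ← pow_succ]

lemma map_pow_two_pow_of_commute (hp : IsCStarSeminorm p) {a : A} (ha : Commute (star a) a)
    (k : ℕ) : p (a ^ 2 ^ k) = p a ^ 2 ^ k := by
  have hsq : p (a ^ 2 ^ k) ^ 2 = (p a ^ 2 ^ k) ^ 2 := by
    rw [← hp.map_star_mul_self, star_pow, ← ha.mul_pow,
      hp.map_pow_two_pow_of_isSelfAdjoint (.star_mul_self a), hp.map_star_mul_self, ← pow_mul,
      ← pow_mul, mul_comm]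
  exact (pow_left_inj₀ (hp.nonneg _) (pow_nonneg (hp.nonneg a) _) two_ne_zero).1 hsq

end IsCStarSeminorm

noncomputable instance UniformSpace.Completion.instNormedAlgebraOfSeminormedRing {𝕜 E : Type*}
    [NormedField 𝕜] [SeminormedRing E] [NormedAlgebra 𝕜 E] : NormedAlgebra 𝕜 (Completion E) where
  norm_smul_le := norm_smul_le

lemma spectralRadius_eq_nnnorm_of_nnnorm_pow_two_pow {B : Type*} [NormedRing B]
    [NormedAlgebra ℂ B] [CompleteSpace B] {b : B} (hb : ∀ k : ℕ, ‖b ^ 2 ^ k‖₊ = ‖b‖₊ ^ 2 ^ k) :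
    spectralRadius ℂ b = ‖b‖₊ := by
  refine tendsto_nhds_unique ((spectrum.pow_nnnorm_pow_one_div_tendsto_nhds_spectralRadius b).comp
    (tendsto_pow_atTop_atTop_of_one_lt one_lt_two)) (tendsto_const_nhds.congr fun k => ?_)
  rw [Function.comp_apply, hb, ENNReal.coe_pow, ← ENNReal.rpow_natCast, ← ENNReal.rpow_mul]
  simp

lemma nnnorm_le_spectralRadius_of_nnnorm_pow_two_pow {E : Type*} [SeminormedRing E]
    [NormedAlgebra ℂ E] {x : E} (hx : ∀ k : ℕ, ‖x ^ 2 ^ k‖₊ = ‖x‖₊ ^ 2 ^ k) :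
    (‖x‖₊ : ℝ≥0∞) ≤ spectralRadius ℂ x := by
  let ι : E →ₐ[ℂ] Completion E := { Completion.coeRingHom with commutes' := fun _ => rfl }
  have hι : ∀ y : E, ‖ι y‖₊ = ‖y‖₊ := fun y => NNReal.eq (Completion.norm_coe y)
  have hιx : spectralRadius ℂ (ι x) = ‖x‖₊ := by
    rw [spectralRadius_eq_nnnorm_of_nnnorm_pow_two_pow (b := ι x) fun k => by
      rw [← map_pow, hι, hι, hx], hι]
  exact hιx ▸ iSup₂_le fun k hk => le_iSup₂ (f := fun k (_ : k ∈ spectrum ℂ x) => (‖k‖₊ : ℝ≥0∞))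
    k (AlgHom.spectrum_apply_subset ι x hk)

lemma IsCStarSeminorm.ofReal_le_spectralRadius {A : Type*} [Ring A] [StarRing A] [Algebra ℂ A]
    {p : A → ℝ} (hp : IsCStarSeminorm p) {a : A} (ha : Commute (star a) a) :
    ENNReal.ofReal (p a) ≤ spectralRadius ℂ a := by
  -- `A` carries no topology here, so `p` can be installed as its norm.
  let _ : SeminormedRing A := hp.toRingSeminorm.toSeminormedRing
  let _ : NormedAlgebra ℂ A := { norm_smul_le c x := (hp.map_smul c x).le }
  exact (ENNReal.ofReal_coe_nnreal (p := ‖a‖₊)).trans_le <|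
    nnnorm_le_spectralRadius_of_nnnorm_pow_two_pow fun k =>
      NNReal.eq (hp.map_pow_two_pow_of_commute ha k)

lemma ofReal_le_uniformNorm {A : Type*} [UniformSpace A] [Ring A] [StarRing A] [Algebra ℂ A]
    {p : A → ℝ} (hp : p ∈ contCStarSeminorms A) (a : A) :
    ENNReal.ofReal (p a) ≤ uniformNorm A a :=
  le_iSup₂ (f := fun p (_ : p ∈ contCStarSeminorms A) => ENNReal.ofReal (p a)) p hp

namespace ProCStarAlgebra

variable {A : Type*} [UniformSpace A] [Ring A] [StarRing A] [Algebra ℂ A] [ProCStarAlgebra A]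

attribute [local instance] ProCStarAlgebra.t2 ProCStarAlgebra.complete
  ProCStarAlgebra.topologicalRing ProCStarAlgebra.uniformAddGroup

lemma summable_of_summable_seminorm {ι : Type*} {f : ι → A}
    (hf : ∀ p ∈ contCStarSeminorms A, Summable fun i => p (f i)) : Summable f := by
  refine summable_iff_vanishing.2 fun e he => ?_
  obtain ⟨p, hp, ε, hε, hball⟩ := (ProCStarAlgebra.mem_nhds_zero e).1 he
  obtain ⟨s, hs⟩ := summable_iff_vanishing_norm.1 (hf p hp) ε hε
  refine ⟨s, fun t ht => hball ?_⟩
  calc p (∑ i ∈ t, f i) ≤ ∑ i ∈ t, p (f i) :=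
        Finset.le_sum_of_subadditive p hp.1.map_zero.le hp.1.map_add_le t f
    _ ≤ ‖∑ i ∈ t, p (f i)‖ := Real.le_norm_self _
    _ < ε := hs t ht

lemma isUnit_one_sub_of_seminorm_lt_one {x : A} (hx : ∀ p ∈ contCStarSeminorms A, p x < 1) :
    IsUnit (1 - x) := by
  have hsum : Summable (x ^ ·) := summable_of_summable_seminorm fun p hp =>
    (summable_geometric_of_lt_one (hp.1.nonneg x) (hx p hp)).of_nonneg_of_le
      (fun _ => hp.1.nonneg _) (hp.1.map_pow_le x)
  exact ⟨⟨1 - x, ∑' n, x ^ n, hsum.one_sub_mul_tsum_pow, hsum.tsum_pow_mul_one_sub⟩, rfl⟩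

lemma nnnorm_le_uniformNorm_of_mem_spectrum {a : A} {z : ℂ} (hz : z ∈ spectrum ℂ a) :
    (‖z‖₊ : ℝ≥0∞) ≤ uniformNorm A a := by
  by_contra! hlt
  have hz0 : z ≠ 0 := by
    rintro rfl
    simp at hlt
  have hlt_one : ∀ p ∈ contCStarSeminorms A, p (z⁻¹ • a) < 1 := by
    intro p hp
    have hpa : ENNReal.ofReal (p a) < ‖z‖₊ := (ofReal_le_uniformNorm hp a).trans_lt hlt
    rw [← ENNReal.ofReal_coe_nnreal, coe_nnnorm,
      ENNReal.ofReal_lt_ofReal_iff (norm_pos_iff.2 hz0)] at hpa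
    rw [hp.1.map_smul, norm_inv, inv_mul_lt_one₀ (norm_pos_iff.2 hz0)]
    exact hpa
  refine spectrum.mem_iff.1 hz ?_
  have hfactor : algebraMap ℂ A z - a = algebraMap ℂ A z * (1 - z⁻¹ • a) := by
    rw [mul_sub, mul_one, Algebra.algebraMap_eq_smul_one, smul_mul_assoc, one_mul, smul_smul,
      mul_inv_cancel₀ hz0, one_smul]
  rw [hfactor]
  exact ((Units.mk0 z hz0).isUnit.map (algebraMap ℂ A)).mul
    (isUnit_one_sub_of_seminorm_lt_one hlt_one)

end ProCStarAlgebra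

/-- For a normal element `a` of a unital pro-C*-algebra `A`,
`‖a‖_∞ = r_A(a)` in `[0,∞]`, where `r_A(a)` is the spectral radius.  In particular, a
normal element is bounded iff it is spectrally bounded. -/
theorem stmt12 {A : Type*} [UniformSpace A] [Ring A] [StarRing A] [Algebra ℂ A]
    [ProCStarAlgebra A] (a : A) (ha : star a * a = a * star a) :
    uniformNorm A a = spectralRadius ℂ a ∧
    (uniformNorm A a < ⊤ ↔ spectralRadius ℂ a < ⊤) := by
  have h : uniformNorm A a = spectralRadius ℂ a :=
    le_antisymm (iSup₂_le fun _ hp => hp.1.ofReal_le_spectralRadius ha)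
      (iSup₂_le fun _ hz => ProCStarAlgebra.nnnorm_le_uniformNorm_of_mem_spectrum hz)
  exact ⟨h, by rw [h]⟩
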